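/- For all real numbers a and b, |tanh(a+b) − tanh(a−b)| ≤ 2 tanh|b|. -/

import Mathlib

/-!
Since `tanh x - tanh y = sinh (x - y) / (cosh x * cosh y)`, the difference equals
`sinh (2b) / (cosh (a + b) * cosh (a - b)) = 2 sinh b cosh b / (sinh² a + cosh² b)`,
whose absolute value is largest at `a = 0`, where it is `2 |tanh b|`.
-/

namespace Real

theorem abs_tanh (x : ℝ) : |tanh x| = tanh |x| := by
  rw [tanh_eq_sinh_div_cosh, tanh_eq_sinh_div_cosh, abs_div, abs_sinh,
    abs_of_pos (cosh_pos x), cosh_abs]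

theorem tanh_sub_tanh (x y : ℝ) : tanh x - tanh y = sinh (x - y) / (cosh x * cosh y) := by
  rw [tanh_eq_sinh_div_cosh, tanh_eq_sinh_div_cosh,
    div_sub_div _ _ (cosh_pos x).ne' (cosh_pos y).ne', sinh_sub]

theorem cosh_add_mul_cosh_sub (x y : ℝ) :
    cosh (x + y) * cosh (x - y) = sinh x ^ 2 + cosh y ^ 2 := by
  rw [cosh_add, cosh_sub]
  linear_combination cosh y ^ 2 * cosh_sq x - sinh x ^ 2 * sinh_sq y

theorem cosh_sq_le_cosh_add_mul_cosh_sub (x y : ℝ) :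
    cosh y ^ 2 ≤ cosh (x + y) * cosh (x - y) := by
  rw [cosh_add_mul_cosh_sub]
  exact le_add_of_nonneg_left (sq_nonneg _)

end Real

open Real in
theorem abs_tanh_add_sub_tanh_sub_le (a b : ℝ) :
    |Real.tanh (a + b) - Real.tanh (a - b)| ≤ 2 * Real.tanh |b| := by
  have hcosh_b := cosh_pos b
  have hnum : |sinh ((a + b) - (a - b))| = 2 * |sinh b| * cosh b := by
    rw [add_sub_sub_cancel, ← two_mul, sinh_two_mul, abs_mul, abs_mul, abs_two,
      abs_of_pos hcosh_b]
  calc |tanh (a + b) - tanh (a - b)|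
      = 2 * |sinh b| * cosh b / (cosh (a + b) * cosh (a - b)) := by
        rw [tanh_sub_tanh, abs_div, hnum, abs_of_pos (mul_pos (cosh_pos _) (cosh_pos _))]
    _ ≤ 2 * |sinh b| * cosh b / cosh b ^ 2 :=
        div_le_div_of_nonneg_left (by positivity) (by positivity)
          (cosh_sq_le_cosh_add_mul_cosh_sub a b)
    _ = 2 * tanh |b| := by
        rw [← abs_tanh, tanh_eq_sinh_div_cosh, abs_div, abs_of_pos hcosh_b]
        field_simp
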